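/- Let n : ℕ, let V : ℝⁿ → ℝⁿ be a C² vector field and f : ℝⁿ → ℝ a function, and suppose V is mixed Killing with mixed Killing factor f. Then for every p ∈ ℝⁿ: trace(fderiv ℝ (∇_V V) p) + Σ_{i} ‖DV(p) e_i‖² = f(p) · trace(DV(p)), where (e_i) is the standard orthonormal basis of ℝⁿ (so the middle term is the squared Hilbert–Schmidt norm of DV(p) and the first term is div(∇_V V)(p)). (This is the flat-space, Ric = 0 form of the paper's traced identity (e9).) -/

import Mathlib

/-!
Take traces in `B = f • A`. Since `tr T* = tr T`, we get `tr A = 2 div V` and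
`tr (D_V A) = 2 tr (D²V(p) (V p))`, while `tr (A ∘ DV)` and `tr (DV* ∘ A)` both equal
`tr (DV ∘ DV) + ‖DV‖²_HS`. By symmetry of the second derivative,
`D(∇_V V) = DV ∘ DV + D²V(p) (V p)`, so `tr B = 2 (div (∇_V V) + ‖DV‖²_HS)`.
-/

open scoped RealInnerProductSpace

noncomputable section

/-- Euclidean space `ℝⁿ`. -/
abbrev E (n : ℕ) := EuclideanSpace ℝ (Fin n)

/-- The field of symmetric operators representing the Lie derivative `L_V g` of the flat
metric: `A(p) = DV(p) + DV(p)*`. -/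
def LieDerivOp {n : ℕ} (V : E n → E n) (p : E n) : E n →L[ℝ] E n :=
  fderiv ℝ V p + ContinuousLinearMap.adjoint (fderiv ℝ V p)

/-- The field of operators representing the second Lie derivative `L_V L_V g`:
`B(p) = (D_{V(p)} A) + A(p) ∘ DV(p) + DV(p)* ∘ A(p)`. -/
def LieDeriv2Op {n : ℕ} (V : E n → E n) (p : E n) : E n →L[ℝ] E n :=
  fderiv ℝ (LieDerivOp V) p (V p)
    + (LieDerivOp V p).comp (fderiv ℝ V p)
    + (ContinuousLinearMap.adjoint (fderiv ℝ V p)).comp (LieDerivOp V p)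

/-- `V` is a mixed Killing vector field with mixed Killing factor `f` if
`B(p) = f(p) • A(p)` for all `p`. -/
def IsMixedKilling {n : ℕ} (V : E n → E n) (f : E n → ℝ) : Prop :=
  ∀ p, LieDeriv2Op V p = f p • LieDerivOp V p

open ContinuousLinearMap

section Adjoint

variable {F G : Type*} [NormedAddCommGroup F] [InnerProductSpace ℝ F] [CompleteSpace F]
  [NormedAddCommGroup G] [InnerProductSpace ℝ G] [CompleteSpace G]

/-- `adjoint` is bundled as a conjugate-linear map; over `ℝ` it is linear, which the chain rule
needs. -/
def ContinuousLinearMap.adjointReal : (F →L[ℝ] G) ≃ₗᵢ[ℝ] (G →L[ℝ] F) :=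
  { adjoint with map_smul' := fun c T => by simp }

variable {X : Type*} [NormedAddCommGroup X] [NormedSpace ℝ X]

theorem HasFDerivAt.adjoint {D : X → F →L[ℝ] G} {D' : X →L[ℝ] F →L[ℝ] G} {p : X}
    (hD : HasFDerivAt D D' p) :
    HasFDerivAt (fun q => adjoint (D q)) ((adjointReal : (F →L[ℝ] G) ≃ₗᵢ[ℝ] _) ∘L D') p :=
  (adjointReal (F := F) (G := G)).toContinuousLinearEquiv.hasFDerivAt.comp p hD

end Adjoint

section Trace

variable {F ι : Type*} [NormedAddCommGroup F] [InnerProductSpace ℝ F] [FiniteDimensional ℝ F]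
  [Fintype ι]

theorem ContinuousLinearMap.trace_adjoint_comp (b : OrthonormalBasis ι ℝ F) (T S : F →L[ℝ] F) :
    LinearMap.trace ℝ F (adjoint T ∘L S : F →L[ℝ] F) = ∑ i, ⟪T (b i), S (b i)⟫ := by
  simp [LinearMap.trace_eq_sum_inner _ b, adjoint_inner_right]

theorem ContinuousLinearMap.trace_adjoint (T : F →L[ℝ] F) :
    LinearMap.trace ℝ F (adjoint T : F →L[ℝ] F) = LinearMap.trace ℝ F T := by
  simpa [LinearMap.trace_eq_sum_inner _ (stdOrthonormalBasis ℝ F), real_inner_comm]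
    using ContinuousLinearMap.trace_adjoint_comp (stdOrthonormalBasis ℝ F) T 1

theorem ContinuousLinearMap.trace_adjoint_comp_self (b : OrthonormalBasis ι ℝ F) (T : F →L[ℝ] F) :
    LinearMap.trace ℝ F (adjoint T ∘L T : F →L[ℝ] F) = ∑ i, ‖T (b i)‖ ^ 2 := by
  rw [ContinuousLinearMap.trace_adjoint_comp b]
  simp only [real_inner_self_eq_norm_sq]

end Trace

section SecondDerivative

variable {F : Type*} [NormedAddCommGroup F] [NormedSpace ℝ F]

theorem fderiv_fderiv_apply_self {V : F → F} {p : F} (hV : ContDiffAt ℝ 2 V p) :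
    fderiv ℝ (fun q => fderiv ℝ V q (V q)) p
      = fderiv ℝ V p ∘L fderiv ℝ V p + fderiv ℝ (fderiv ℝ V) p (V p) := by
  have hD : DifferentiableAt ℝ (fderiv ℝ V) p :=
    (hV.fderiv_right (m := 1) le_rfl).differentiableAt one_ne_zero
  have hsymm : IsSymmSndFDerivAt ℝ V p := hV.isSymmSndFDerivAt (by simp)
  rw [fderiv_clm_apply hD (hV.differentiableAt two_ne_zero)]
  congr 1
  ext w
  exact hsymm w (V p)

end SecondDerivative

section LieDerivative

variable {n : ℕ}

theorem trace_lieDerivOp (V : E n → E n) (p : E n) :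
    LinearMap.trace ℝ (E n) (LieDerivOp V p : E n →ₗ[ℝ] E n)
      = 2 * LinearMap.trace ℝ (E n) (fderiv ℝ V p : E n →ₗ[ℝ] E n) := by
  rw [LieDerivOp, toLinearMap_add, map_add, trace_adjoint]
  ring

variable {V : E n → E n} {p : E n}

theorem fderiv_lieDerivOp_apply (hD : DifferentiableAt ℝ (fderiv ℝ V) p) (v : E n) :
    fderiv ℝ (LieDerivOp V) p v
      = fderiv ℝ (fderiv ℝ V) p v + adjoint (fderiv ℝ (fderiv ℝ V) p v) := by
  have h : HasFDerivAt (LieDerivOp V) _ p := hD.hasFDerivAt.add hD.hasFDerivAt.adjoint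
  rw [h.fderiv]
  rfl

theorem trace_lieDeriv2Op (hV : ContDiffAt ℝ 2 V p) :
    LinearMap.trace ℝ (E n) (LieDeriv2Op V p : E n →ₗ[ℝ] E n)
      = 2 * (LinearMap.trace ℝ (E n)
          (fderiv ℝ (fun q => fderiv ℝ V q (V q)) p : E n →ₗ[ℝ] E n)
        + ∑ i : Fin n, ‖fderiv ℝ V p (EuclideanSpace.single i 1)‖ ^ 2) := by
  have hD : DifferentiableAt ℝ (fderiv ℝ V) p :=
    (hV.fderiv_right (m := 1) le_rfl).differentiableAt one_ne_zero
  have hHS := trace_adjoint_comp_self (EuclideanSpace.basisFun (Fin n) ℝ) (fderiv ℝ V p)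
  simp only [EuclideanSpace.basisFun_apply] at hHS
  rw [LieDeriv2Op, fderiv_lieDerivOp_apply hD, fderiv_fderiv_apply_self hV, LieDerivOp]
  simp only [add_comp, comp_add, toLinearMap_add, map_add, trace_adjoint, ← adjoint_comp, hHS]
  ring

end LieDerivative

/-- the flat-space, Ricci-flat form of the traced identity (e9):
if `V` is mixed Killing with factor `f`, then
`div(∇_V V)(p) + ‖DV(p)‖²_HS = f(p) · div V(p)`. -/
theorem isMixedKilling_traced {n : ℕ} (V : E n → E n) (hV : ContDiff ℝ 2 V)
    (f : E n → ℝ) (hmk : IsMixedKilling V f) (p : E n) :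
    LinearMap.trace ℝ (E n) (fderiv ℝ (fun q => fderiv ℝ V q (V q)) p : E n →ₗ[ℝ] E n)
        + ∑ i : Fin n, ‖fderiv ℝ V p (EuclideanSpace.single i 1)‖ ^ 2 =
      f p * LinearMap.trace ℝ (E n) (fderiv ℝ V p : E n →ₗ[ℝ] E n) := by
  have h := congrArg (fun T : E n →L[ℝ] E n => LinearMap.trace ℝ (E n) (T : E n →ₗ[ℝ] E n))
    (hmk p)
  simp only [trace_lieDeriv2Op hV.contDiffAt, toLinearMap_smul, map_smul, trace_lieDerivOp,
    smul_eq_mul] at h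
  linarith
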